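/- The expected number of k×k equilibria in an m×n random weak-selection fitness matrix is at least 2·(mn/(4k²))^k. -/

import Mathlib

open Finset Matrix MeasureTheory

/-- The uniform probability measure on `[-1, 1]`. -/
noncomputable def unifMeasure : Measure ℝ :=
  (2 : ENNReal)⁻¹ • volume.restrict (Set.Icc (-1 : ℝ) 1)

instance : IsProbabilityMeasure unifMeasure := by
  constructor
  rw [unifMeasure, Measure.smul_apply, Measure.restrict_apply MeasurableSet.univ,
    Set.univ_inter, Real.volume_Icc]
  norm_num
  exact ENNReal.inv_mul_cancel (by norm_num) (by norm_num)

instance matrixMeasurableSpace (m n : ℕ) : MeasurableSpace (Matrix (Fin m) (Fin n) ℝ) :=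
  MeasurableSpace.pi

/-- The law of an `m × n` random matrix with i.i.d. entries uniform on `[-1,1]`. -/
noncomputable def rectMatrixMeasure (m n : ℕ) : Measure (Matrix (Fin m) (Fin n) ℝ) :=
  Measure.pi fun _ : Fin m => Measure.pi fun _ : Fin n => unifMeasure

/-- A `k × k` submatrix, given by strictly monotone row/column selections, is an
equilibrium if it is invertible and its inverse has positive row and column sums. -/
def IsEquilibriumSubmatrix {m n k : ℕ} (Δ : Matrix (Fin m) (Fin n) ℝ)
    (r : Fin k → Fin m) (c : Fin k → Fin n) : Prop :=
  StrictMono r ∧ StrictMono c ∧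
    IsUnit (Δ.submatrix r c).det ∧
    (∀ i, 0 < ∑ j, (Δ.submatrix r c)⁻¹ i j) ∧
    (∀ j, 0 < ∑ i, (Δ.submatrix r c)⁻¹ i j)

/-!
By linearity of expectation, the expected number of equilibria is the sum over the
`C(m,k) * C(n,k)` pairs of increasing row and column selections of the probability that the
selected submatrix is an equilibrium. The entries are i.i.d., so every selected submatrix is a
uniform random `k × k` matrix, and `C(m,k) ≥ (m/k)^k`.

For a `k × k` matrix `B`, the sign flips `B ↦ D_u B D_v` (with `D_u`, `D_v` diagonal with
entries `±1`) preserve the law of `B`, and they turn `B⁻¹` into `D_v B⁻¹ D_u`. Pick signs `u, v`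
maximising `v ⬝ B⁻¹ u`. Flipping a single `v_i` cannot increase this value, so
`v_i (B⁻¹ u)_i ≥ 0`, and these are the row sums of the flipped inverse; the column sums are
handled the same way. Outside the zero set of a nonzero polynomial, which is null, these
inequalities are strict. Since `(u, v)` and `(-u, -v)` give the same flip, at least `2` of the
`4^k` flips of almost every `B` are equilibria, so an equilibrium has probability at least
`2 / 4^k`.
-/

open scoped ENNReal

namespace MvPolynomial

theorem ae_eval_ne_zero_pi_fin : ∀ {n : ℕ} (μ : Fin n → Measure ℝ) [∀ i, SigmaFinite (μ i)]
    [∀ i, NullSingletonClass (μ i)] {P : MvPolynomial (Fin n) ℝ}, P ≠ 0 →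
    ∀ᵐ x ∂Measure.pi μ, eval x P ≠ 0
  | 0, μ, _, _, P, hP => ae_of_all _ fun x => by
    rw [eq_C_of_isEmpty P, eval_C]
    intro h
    exact hP (by rw [eq_C_of_isEmpty P, h, C_0])
  | n + 1, μ, _, _, P, hP => by
    set Q := finSuccEquiv ℝ n P
    have hQ : Q.leadingCoeff ≠ 0 := by simpa [Q] using hP
    have hsections : ∀ᵐ y ∂Measure.pi (fun j => μ (Fin.succ j)), ∀ᵐ a ∂μ 0,
        eval (Fin.cons a y) P ≠ 0 := by
      filter_upwards [ae_eval_ne_zero_pi_fin _ hQ] with y hy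
      have hQy : Q.map (eval y) ≠ 0 := fun h => hy <| by
        rw [Polynomial.leadingCoeff, ← Polynomial.coeff_map, h, Polynomial.coeff_zero]
      rw [ae_iff]
      refine measure_mono_null (fun a ha => ?_)
        ((Polynomial.finite_setOfPred_isRoot hQy).measure_zero _)
      simpa [eval_eq_eval_mv_eval'] using ha
    have hmeas : MeasurableSet {z : ℝ × (Fin n → ℝ) | eval (Fin.cons z.1 z.2) P ≠ 0} :=
      (measurableSet_singleton 0).compl.preimage
        ((continuous_eval P).comp (by fun_prop)).measurable
    have hprod := (Measure.ae_prod_iff_ae_ae hmeas).2 ((Measure.ae_ae_comm hmeas).2 hsections)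
    simpa using (measurePreserving_piFinSuccAbove μ 0).quasiMeasurePreserving.ae hprod

theorem ae_eval_ne_zero_pi {ι : Type*} [Fintype ι] (μ : ι → Measure ℝ) [∀ i, SigmaFinite (μ i)]
    [∀ i, NullSingletonClass (μ i)] {P : MvPolynomial ι ℝ} (hP : P ≠ 0) :
    ∀ᵐ x ∂Measure.pi μ, eval x P ≠ 0 := by
  set e := Fintype.equivFin ι
  have hmp := measurePreserving_arrowCongr' μ (fun j => μ (e.symm j)) e (.refl ℝ)
    fun i => by simpa using .id (μ i)
  have hren : rename e P ≠ 0 := (rename_injective _ e.injective).ne_iff' (map_zero _) |>.2 hP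
  filter_upwards [hmp.quasiMeasurePreserving.ae (ae_eval_ne_zero_pi_fin _ hren)] with x hx
  simpa [eval_rename, MeasurableEquiv.arrowCongr', Equiv.arrowCongr', Function.comp_def] using hx

end MvPolynomial

namespace MeasureTheory

theorem measurePreserving_comp_of_injective {ι ι' α : Type*} [Fintype ι] [Fintype ι']
    [MeasurableSpace α] (μ : Measure α) [IsProbabilityMeasure μ] {f : ι' → ι}
    (hf : Function.Injective f) :
    MeasurePreserving (fun x : ι → α => x ∘ f) (Measure.pi fun _ => μ)
      (Measure.pi fun _ => μ) := by
  classical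
  have hrestrict := measurePreserving_fst.comp
    (measurePreserving_piEquivPiSubtypeProd (fun _ : ι => μ) (· ∈ Set.range f))
  let _ : Fintype (Set.range f) := Subtype.fintype _
  convert (measurePreserving_arrowCongr' (fun _ => μ) (fun _ => μ) (Equiv.ofInjective f hf).symm
    (.refl α) fun _ => .id μ).comp hrestrict
  ext x
  simp [MeasurableEquiv.arrowCongr', Equiv.arrowCongr']

theorem lintegral_ncard_setOf {Ω A : Type*} [MeasurableSpace Ω] [Fintype A] {μ : Measure Ω}
    {P : A → Ω → Prop} (hP : ∀ a, MeasurableSet {x | P a x}) :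
    ∫⁻ x, ({a | P a x}.ncard : ℝ≥0∞) ∂μ = ∑ a, μ {x | P a x} := by
  classical
  have hcount : ∀ x, ({a | P a x}.ncard : ℝ≥0∞) = ∑ a, {x | P a x}.indicator 1 x := by
    intro x
    rw [Set.ncard_eq_toFinset_card', Set.toFinset_ofPred, Finset.card_filter]
    push_cast
    simp [Set.indicator_apply]
  simp_rw [hcount]
  rw [lintegral_finsetSum _ fun a _ => measurable_one.indicator (hP a)]
  simp_rw [lintegral_indicator_one (hP _)]

end MeasureTheory

open scoped Classical in
theorem card_filter_strictMono (k m : ℕ) : #{r : Fin k → Fin m | StrictMono r} = m.choose k := by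
  let e : {r : Fin k → Fin m // StrictMono r} ≃ (Fin k ↪o Fin m) :=
    { toFun r := OrderEmbedding.ofStrictMono r.1 r.2
      invFun f := ⟨f, f.strictMono⟩
      left_inv _ := rfl
      right_inv _ := rfl }
  rw [← Fintype.card_subtype, ← Nat.card_eq_fintype_card,
    Nat.card_congr (e.trans Set.powersetCard.ofFinEmbEquiv), Set.powersetCard.card, Nat.card_fin]

theorem Nat.pow_le_pow_mul_choose {k m : ℕ} (hkm : k ≤ m) : m ^ k ≤ k ^ k * m.choose k := by
  have hterm : ∀ i ∈ Finset.range k, m * (k - i) ≤ k * (m - i) := by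
    intro i hi
    have hik : i ≤ k := (Finset.mem_range.1 hi).le
    zify [hik, hik.trans hkm]
    nlinarith
  have key : m ^ k * k.descFactorial k ≤ k ^ k * m.descFactorial k := by
    simpa only [Nat.descFactorial_eq_prod_range, Finset.prod_mul_distrib, Finset.prod_const,
      Finset.card_range] using Finset.prod_le_prod' hterm
  rw [Nat.descFactorial_self, Nat.descFactorial_eq_factorial_mul_choose, mul_left_comm,
    mul_comm (m ^ k)] at key
  exact Nat.le_of_mul_le_mul_left key k.factorial_pos

theorem div_pow_le_choose {k m : ℕ} (hkm : k ≤ m) : ((m : ℝ) / k) ^ k ≤ m.choose k := by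
  rw [div_pow, div_le_iff₀ (by exact_mod_cast k.pow_self_pos), mul_comm]
  exact_mod_cast Nat.pow_le_pow_mul_choose hkm

theorem div_sq_pow_le_choose_mul_choose {k m n : ℕ} (hkm : k ≤ m) (hkn : k ≤ n) :
    ((m * n : ℝ) / k ^ 2) ^ k ≤ m.choose k * n.choose k := by
  rw [sq, ← div_mul_div_comm, mul_pow]
  exact mul_le_mul (div_pow_le_choose hkm) (div_pow_le_choose hkn) (by positivity) (by positivity)

section SignFlip

variable {ι κ R : Type*}

def signVec [Ring R] (u : ι → ℤˣ) : ι → R := fun i => ((u i : ℤ) : R)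

theorem signVec_mul_self [Ring R] (u : ι → ℤˣ) (i : ι) : signVec u i * signVec u i = (1 : R) := by
  simp [signVec, ← Int.cast_mul, ← Units.val_mul, Int.units_mul_self]

theorem signVec_ne_zero (u : ι → ℤˣ) (i : ι) : signVec u i ≠ (0 : ℝ) :=
  left_ne_zero_of_mul_eq_one (signVec_mul_self (R := ℝ) u i)

theorem signVec_neg [Ring R] (u : ι → ℤˣ) : signVec (-u) = -(signVec u : ι → R) := by
  ext; simp [signVec]

theorem signVec_mul_nonneg_of_forall_le [Fintype ι] [DecidableEq ι] {w : ι → ℝ} {u : ι → ℤˣ}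
    (hu : ∀ u', (signVec u' : ι → ℝ) ⬝ᵥ w ≤ signVec u ⬝ᵥ w) (i : ι) :
    0 ≤ (signVec u i : ℝ) * w i := by
  have hflip : (signVec u : ι → ℝ) - signVec (Function.update u i (-u i)) =
      Pi.single i (2 * signVec u i) := by
    ext j
    by_cases h : j = i
    · subst h
      simp [signVec]
      ring
    · simp [signVec, h]
  have := hu (Function.update u i (-u i))
  rw [← sub_nonneg, ← sub_dotProduct, hflip, single_dotProduct] at this
  linarith

variable [Fintype ι] [Fintype κ] [DecidableEq ι] [DecidableEq κ]

def signFlip [CommRing R] (u : ι → ℤˣ) (v : κ → ℤˣ) (B : Matrix ι κ R) : Matrix ι κ R :=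
  Matrix.diagonal (signVec u : ι → R) * B * Matrix.diagonal (signVec v : κ → R)

theorem signFlip_apply [CommRing R] (u : ι → ℤˣ) (v : κ → ℤˣ) (B : Matrix ι κ R) (i : ι) (j : κ) :
    signFlip u v B i j = signVec u i * B i j * signVec v j := by
  simp [signFlip]

theorem signFlip_neg_neg [CommRing R] (u : ι → ℤˣ) (v : κ → ℤˣ) (B : Matrix ι κ R) :
    signFlip (-u) (-v) B = signFlip u v B := by
  ext i j
  simp [signFlip_apply, signVec_neg]

theorem diagonal_signVec_mul_self [Ring R] (u : ι → ℤˣ) :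
    Matrix.diagonal (signVec u : ι → R) * Matrix.diagonal (signVec u) = 1 := by
  simp [diagonal_mul_diagonal, signVec_mul_self]

theorem inv_diagonal_signVec [CommRing R] (u : ι → ℤˣ) :
    (Matrix.diagonal (signVec u : ι → R))⁻¹ = Matrix.diagonal (signVec u) :=
  inv_eq_left_inv (diagonal_signVec_mul_self u)

theorem isUnit_det_signFlip [CommRing R] {B : Matrix ι ι R} (hB : IsUnit B.det) (u v : ι → ℤˣ) :
    IsUnit (signFlip u v B).det := by
  rw [signFlip, det_mul, det_mul]
  exact ((isUnit_det_of_left_inverse (diagonal_signVec_mul_self u)).mul hB).mul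
    (isUnit_det_of_left_inverse (diagonal_signVec_mul_self v))

theorem inv_signFlip [CommRing R] (u v : ι → ℤˣ) (B : Matrix ι ι R) :
    (signFlip u v B)⁻¹ = signFlip v u B⁻¹ := by
  simp only [signFlip, Matrix.mul_inv_rev, inv_diagonal_signVec, Matrix.mul_assoc]

def IsEquilibrium (B : Matrix ι ι ℝ) : Prop :=
  IsUnit B.det ∧ (∀ i, 0 < ∑ j, B⁻¹ i j) ∧ ∀ j, 0 < ∑ i, B⁻¹ i j

/-- A polynomial in the entries of `B` (hence the adjugate rather than the inverse) which is
nonzero iff `B` is invertible and no signed row or column sum of `B⁻¹` vanishes. -/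
def signGenericity [CommRing R] (B : Matrix ι ι R) : R :=
  B.det * ∏ u : ι → ℤˣ, ∏ i, (B.adjugate *ᵥ signVec u) i * (signVec u ᵥ* B.adjugate) i

theorem RingHom.map_signGenericity {S : Type*} [CommRing R] [CommRing S] (f : R →+* S)
    (B : Matrix ι ι R) : f (signGenericity B) = signGenericity (f.mapMatrix B) := by
  rw [signGenericity, signGenericity, ← RingHom.map_adjugate]
  simp [RingHom.map_det, mulVec, vecMul, dotProduct, signVec]

theorem signGenericity_eq_eval [CommRing R] (B : Matrix ι ι R) :
    signGenericity B =
      MvPolynomial.eval (fun p => B p.1 p.2) (signGenericity (mvPolynomialX ι ι R)) := by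
  rw [RingHom.map_signGenericity, mvPolynomialX_mapMatrix_eval]

theorem signGenericity_one [CommRing R] : signGenericity (1 : Matrix ι ι R) = 1 := by
  simp [signGenericity, signVec_mul_self]

theorem isUnit_det_of_signGenericity_ne_zero {B : Matrix ι ι ℝ} (hB : signGenericity B ≠ 0) :
    IsUnit B.det :=
  (left_ne_zero_of_mul hB).isUnit

theorem inv_mulVec_signVec_ne_zero_of_signGenericity_ne_zero {B : Matrix ι ι ℝ}
    (hB : signGenericity B ≠ 0) (u : ι → ℤˣ) (i : ι) :
    (B⁻¹ *ᵥ signVec u) i ≠ 0 ∧ (signVec u ᵥ* B⁻¹) i ≠ 0 := by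
  simp only [signGenericity, mul_ne_zero_iff, Finset.prod_ne_zero_iff, Finset.mem_univ,
    true_imp_iff] at hB
  simp [Matrix.inv_def, smul_mulVec, vecMul_smul, hB.1, hB.2 u i]

theorem exists_isEquilibrium_signFlip {B : Matrix ι ι ℝ} (hB : signGenericity B ≠ 0) :
    ∃ u v : ι → ℤˣ, IsEquilibrium (signFlip u v B) := by
  have hgen := inv_mulVec_signVec_ne_zero_of_signGenericity_ne_zero hB
  obtain ⟨⟨v, u⟩, hmax⟩ := Finite.exists_max fun p : (ι → ℤˣ) × (ι → ℤˣ) =>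
    signVec p.1 ⬝ᵥ (B⁻¹ *ᵥ signVec p.2)
  have hrow := signVec_mul_nonneg_of_forall_le (w := B⁻¹ *ᵥ signVec u) fun v' => hmax (v', u)
  have hcol := signVec_mul_nonneg_of_forall_le (u := u) (w := signVec v ᵥ* B⁻¹) fun u' => by
    simpa only [dotProduct_mulVec, dotProduct_comm] using hmax (v, u')
  refine ⟨u, v, isUnit_det_signFlip (isUnit_det_of_signGenericity_ne_zero hB) u v,
    fun i => ?_, fun j => ?_⟩
  · have hsum : ∑ j, (signFlip u v B)⁻¹ i j = signVec v i * (B⁻¹ *ᵥ signVec u) i := by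
      simp [inv_signFlip, signFlip_apply, mulVec, dotProduct, Finset.mul_sum, mul_assoc]
    rw [hsum]
    exact (hrow i).lt_of_ne' (mul_ne_zero (signVec_ne_zero v i) (hgen u i).1)
  · have hsum : ∑ i, (signFlip u v B)⁻¹ i j = signVec u j * (signVec v ᵥ* B⁻¹) j := by
      simp [inv_signFlip, signFlip_apply, vecMul, dotProduct, Finset.mul_sum, mul_comm,
        mul_left_comm]
    rw [hsum]
    exact (hcol j).lt_of_ne' (mul_ne_zero (signVec_ne_zero u j) (hgen v j).2)

theorem two_le_ncard_isEquilibrium_signFlip [Nonempty ι] {B : Matrix ι ι ℝ}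
    (hB : signGenericity B ≠ 0) :
    2 ≤ {p : (ι → ℤˣ) × (ι → ℤˣ) | IsEquilibrium (signFlip p.1 p.2 B)}.ncard := by
  obtain ⟨u, v, huv⟩ := exists_isEquilibrium_signFlip hB
  obtain ⟨i⟩ := ‹Nonempty ι›
  refine (Set.one_lt_ncard_iff (Set.toFinite _)).2 ⟨(u, v), (-u, -v), huv,
    by simpa [signFlip_neg_neg] using huv, fun h => units_ne_neg_self (u i) ?_⟩
  exact congrFun (congrArg Prod.fst h) i

end SignFlip

instance : NullSingletonClass unifMeasure := ⟨fun x => by simp [unifMeasure]⟩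

instance (m n : ℕ) : IsProbabilityMeasure (rectMatrixMeasure m n) :=
  Measure.pi.instIsProbabilityMeasure _

instance (m n : ℕ) : BorelSpace (Matrix (Fin m) (Fin n) ℝ) :=
  inferInstanceAs (BorelSpace (Fin m → Fin n → ℝ))

theorem measurePreserving_neg_unifMeasure : MeasurePreserving Neg.neg unifMeasure unifMeasure := by
  refine ⟨measurable_neg, ?_⟩
  have hsymm : Neg.neg ⁻¹' Set.Icc (-1 : ℝ) 1 = Set.Icc (-1) 1 := by simp
  rw [unifMeasure, Measure.map_smul]
  nth_rw 1 [← hsymm]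
  rw [← Measure.restrict_map measurable_neg measurableSet_Icc, Measure.map_neg_eq_self]

theorem measurePreserving_units_mul_unifMeasure (ε : ℤˣ) :
    MeasurePreserving (fun x => ((ε : ℤ) : ℝ) * x) unifMeasure unifMeasure := by
  rcases Int.units_eq_one_or ε with rfl | rfl
  · simp only [Units.val_one, Int.cast_one, one_mul]
    exact .id _
  · simpa [neg_one_mul] using measurePreserving_neg_unifMeasure

theorem measurePreserving_curry_rectMatrixMeasure (m n : ℕ) :
    MeasurePreserving (MeasurableEquiv.curry (Fin m) (Fin n) ℝ)
      (Measure.pi fun _ => unifMeasure) (rectMatrixMeasure m n) := by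
  refine ⟨(MeasurableEquiv.curry _ _ _).measurable, ?_⟩
  have h := Measure.infinitePi_map_curry (X := ℝ) (ι := Fin m) (κ := Fin n) fun _ _ => unifMeasure
  simp only [Measure.infinitePi_eq_pi] at h
  exact h

theorem measurePreserving_submatrix {m n k l : ℕ} {r : Fin k → Fin m} {c : Fin l → Fin n}
    (hr : Function.Injective r) (hc : Function.Injective c) :
    MeasurePreserving (fun Δ : Matrix (Fin m) (Fin n) ℝ => Δ.submatrix r c)
      (rectMatrixMeasure m n) (rectMatrixMeasure k l) :=
  (measurePreserving_curry_rectMatrixMeasure k l).comp <|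
    (measurePreserving_comp_of_injective unifMeasure (hr.prodMap hc)).comp
      (measurePreserving_curry_rectMatrixMeasure m n).symm

theorem measurePreserving_signFlip {m n : ℕ} (u : Fin m → ℤˣ) (v : Fin n → ℤˣ) :
    MeasurePreserving (signFlip u v) (rectMatrixMeasure m n) (rectMatrixMeasure m n) := by
  have hflip : signFlip u v = fun (B : Matrix (Fin m) (Fin n) ℝ) i j =>
      (((u i * v j : ℤˣ) : ℤ) : ℝ) * B i j := by
    ext B i j
    simp [signFlip_apply, signVec]
    ring
  rw [hflip]
  exact measurePreserving_pi _ _ fun i => measurePreserving_pi _ _ fun j =>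
    measurePreserving_units_mul_unifMeasure (u i * v j)

theorem ae_signGenericity_ne_zero (k : ℕ) :
    ∀ᵐ B ∂rectMatrixMeasure k k, signGenericity B ≠ 0 := by
  have hP : signGenericity (mvPolynomialX (Fin k) (Fin k) ℝ) ≠ 0 := fun h => by
    simpa [signGenericity_eq_eval (1 : Matrix (Fin k) (Fin k) ℝ), h] using
      signGenericity_one (ι := Fin k) (R := ℝ)
  filter_upwards [(measurePreserving_curry_rectMatrixMeasure k k).symm.quasiMeasurePreserving.ae
    (MvPolynomial.ae_eval_ne_zero_pi _ hP)] with B hB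
  rw [signGenericity_eq_eval]
  exact hB

theorem measurable_inv_apply {k : ℕ} (i j : Fin k) :
    Measurable fun B : Matrix (Fin k) (Fin k) ℝ => B⁻¹ i j := by
  simp only [Matrix.inv_def, Ring.inverse_eq_inv', Matrix.smul_apply, smul_eq_mul]
  exact (continuous_id.matrix_det.measurable.inv).mul
    (continuous_id.matrix_adjugate.matrix_elem i j).measurable

theorem measurableSet_isEquilibrium (k : ℕ) :
    MeasurableSet {B : Matrix (Fin k) (Fin k) ℝ | IsEquilibrium B} := by
  simp only [IsEquilibrium, isUnit_iff_ne_zero, Set.ofPred_and, Set.ofPred_forall]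
  refine ((measurableSet_singleton 0).compl.preimage continuous_id.matrix_det.measurable).inter
    ((MeasurableSet.iInter fun i => measurableSet_lt measurable_const ?_).inter
      (MeasurableSet.iInter fun j => measurableSet_lt measurable_const ?_)) <;>
  exact Finset.measurable_sum _ fun _ _ => measurable_inv_apply _ _

theorem two_le_four_pow_mul_measure_isEquilibrium {k : ℕ} (hk : 1 ≤ k) :
    2 ≤ 4 ^ k * rectMatrixMeasure k k {B | IsEquilibrium B} := by
  have : Nonempty (Fin k) := ⟨⟨0, hk⟩⟩
  set μ := rectMatrixMeasure k k
  calc (2 : ℝ≥0∞) = ∫⁻ _, 2 ∂μ := by simp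
  _ ≤ ∫⁻ B, ({p : (Fin k → ℤˣ) × (Fin k → ℤˣ) | IsEquilibrium (signFlip p.1 p.2 B)}.ncard
        : ℝ≥0∞) ∂μ := by
    refine lintegral_mono_ae ?_
    filter_upwards [ae_signGenericity_ne_zero k] with B hB
    exact_mod_cast two_le_ncard_isEquilibrium_signFlip hB
  _ = ∑ p : (Fin k → ℤˣ) × (Fin k → ℤˣ), μ (signFlip p.1 p.2 ⁻¹' {B | IsEquilibrium B}) :=
    lintegral_ncard_setOf fun p =>
      (measurePreserving_signFlip p.1 p.2).measurable (measurableSet_isEquilibrium k)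
  _ = 4 ^ k * μ {B | IsEquilibrium B} := by
    rw [Finset.sum_congr rfl fun p _ => (measurePreserving_signFlip p.1 p.2).measure_preimage
      (measurableSet_isEquilibrium k).nullMeasurableSet]
    simp [μ, Fintype.card_units_int, ← mul_pow]

theorem setOf_isEquilibriumSubmatrix {m n k : ℕ} (r : Fin k → Fin m) (c : Fin k → Fin n) :
    {Δ | IsEquilibriumSubmatrix Δ r c} = if StrictMono r ∧ StrictMono c then
      (fun Δ : Matrix (Fin m) (Fin n) ℝ => Δ.submatrix r c) ⁻¹' {B | IsEquilibrium B} else ∅ := by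
  split_ifs with h
  · ext Δ
    simp [IsEquilibriumSubmatrix, IsEquilibrium, h]
  · exact Set.eq_empty_of_forall_notMem fun Δ hΔ => h ⟨hΔ.1, hΔ.2.1⟩

theorem measurableSet_setOf_isEquilibriumSubmatrix {m n k : ℕ} (r : Fin k → Fin m)
    (c : Fin k → Fin n) : MeasurableSet {Δ | IsEquilibriumSubmatrix Δ r c} := by
  rw [setOf_isEquilibriumSubmatrix]
  split_ifs with h
  · exact (measurePreserving_submatrix h.1.injective h.2.injective).measurable
      (measurableSet_isEquilibrium k)
  · exact .empty

theorem measure_setOf_isEquilibriumSubmatrix {m n k : ℕ} (r : Fin k → Fin m) (c : Fin k → Fin n) :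
    rectMatrixMeasure m n {Δ | IsEquilibriumSubmatrix Δ r c} =
      if StrictMono r ∧ StrictMono c then rectMatrixMeasure k k {B | IsEquilibrium B} else 0 := by
  rw [setOf_isEquilibriumSubmatrix]
  split_ifs with h
  · exact (measurePreserving_submatrix h.1.injective h.2.injective).measure_preimage
      (measurableSet_isEquilibrium k).nullMeasurableSet
  · exact measure_empty

theorem sum_measure_setOf_isEquilibriumSubmatrix (m n k : ℕ) :
    ∑ rc : (Fin k → Fin m) × (Fin k → Fin n),
        rectMatrixMeasure m n {Δ | IsEquilibriumSubmatrix Δ rc.1 rc.2} =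
      (m.choose k * n.choose k : ℕ) * rectMatrixMeasure k k {B | IsEquilibrium B} := by
  simp only [measure_setOf_isEquilibriumSubmatrix, Fintype.sum_prod_type, ite_and]
  simp [Finset.sum_ite, card_filter_strictMono, mul_assoc]

theorem expected_number_of_equilibria (m n k : ℕ) (hk : 1 ≤ k) (hkm : k ≤ m) (hkn : k ≤ n) :
    ENNReal.ofReal (2 * ((m * n : ℝ) / (4 * k ^ 2)) ^ k) ≤
      ∫⁻ Δ, (({rc : (Fin k → Fin m) × (Fin k → Fin n) |
          IsEquilibriumSubmatrix Δ rc.1 rc.2} : Set _).ncard : ENNReal)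
        ∂(rectMatrixMeasure m n) := by
  set N := m.choose k * n.choose k
  have hreal : 2 * ((m * n : ℝ) / (4 * k ^ 2)) ^ k ≤ (N : ℝ) * 2 / 4 ^ k :=
    calc (2 : ℝ) * ((m * n : ℝ) / (4 * k ^ 2)) ^ k = ((m * n : ℝ) / k ^ 2) ^ k * 2 / 4 ^ k := by
          rw [mul_comm 4, ← div_div, div_pow]
          ring
      _ ≤ (N : ℝ) * 2 / 4 ^ k := by
          gcongr
          exact_mod_cast div_sq_pow_le_choose_mul_choose hkm hkn
  rw [lintegral_ncard_setOf (P := fun (rc : (Fin k → Fin m) × (Fin k → Fin n)) Δ =>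
      IsEquilibriumSubmatrix Δ rc.1 rc.2) fun rc => measurableSet_setOf_isEquilibriumSubmatrix _ _,
    sum_measure_setOf_isEquilibriumSubmatrix]
  calc ENNReal.ofReal (2 * ((m * n : ℝ) / (4 * k ^ 2)) ^ k)
      ≤ ENNReal.ofReal ((N : ℝ) * 2 / 4 ^ k) := ENNReal.ofReal_le_ofReal hreal
    _ = N * (2 / 4 ^ k) := by
      rw [ENNReal.ofReal_div_of_pos (by positivity), ENNReal.ofReal_mul (by positivity),
        mul_div_assoc]
      simp
    _ ≤ N * rectMatrixMeasure k k {B | IsEquilibrium B} := by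
      gcongr
      exact ENNReal.div_le_of_le_mul' (two_le_four_pow_mul_measure_isEquilibrium hk)
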